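/- arXiv:1612.09171 — 2 statements merged into one kernel-verified Lean document; each statement's English description precedes it below -/
import Mathlib

section
/- Amortized meta-theorem, strongly convex case: let Γ > 0 and let r, q ≥ 1 be integers. Let (x^t)_{t≥0} be a sequence in ℝⁿ with x⁰ = x°, let A : ℕ → ℝ be nonnegative with A(0) = 0, and set H(t) := F(x^t) + A(t). Assume (a) H(t) ≤ H(t−1) for all t ≥ 1, and (b) there exist α, β > 0 such that for all t ≥ 2r, Σ_{i=t−2r+1}^{t} [H(i−1) − H(i)] ≥ Σ_{i=t−2r+1}^{t−r} [ (α/n)·Σ_{k=1}^n Ŵ(∇_k f(x^{i−1}), x_k^{i−1}, Γ, Ψ_k) + (β/q)·A(i−1) ]. Suppose further that F is strongly convex with parameter μ_F > 0, f is strongly convex with parameter μ_f > 0 (i.e., F − (μ_F/2)‖·‖² and f − (μ_f/2)‖·‖² are convex), Γ ≥ μ_f, and the minimum value of F is 0. Then for all t ≥ 2r, F(x^t) ≤ [ 1 − min{ (α/(2n))·μ_F/(μ_F + Γ − μ_f) , β/(2q) } ]^{t−2r+1} · F(x°). -/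
/-!
At any point `z`, testing the supremum defining `Ŵ` with the step `d = γ (x⋆ - z)` towards a
minimiser gives `γ F(z) ≤ ∑ₖ Ŵ` for `γ = μ_F / (μ_F + Γ - μ_f)`: strong convexity of `f` bounds
the linear term of `W` from below, strong convexity of `F` bounds `F(z + d)` from above, and this
value of `γ` makes the two quadratic remainders cancel. With `θ = min (αγ/n) (β/q)` the progress
assumption then reads `θ (H m + ⋯ + H (m + r - 1)) ≤ H m - H (m + 2r)`. As `H` is decreasing,
this makes the sum of `H` over a window of length `2r` contract by the factor `1 - θ/2` when the
window moves by one step, and comparing such a window sum with `2r H` at both ends gives the rate.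
-/

noncomputable def W (d g x Γ : ℝ) (Ψ : ℝ → ℝ) : ℝ :=
  -(g * d) - Γ / 2 * d ^ 2 + Ψ x - Ψ (x + d)

noncomputable def What (g x Γ : ℝ) (Ψ : ℝ → ℝ) : ℝ := ⨆ d : ℝ, W d g x Γ Ψ

noncomputable def grad {n : ℕ} (f : (Fin n → ℝ) → ℝ) (x : Fin n → ℝ) (j : Fin n) : ℝ :=
  fderiv ℝ f x (Pi.single j 1)

open Set Finset

namespace ConvexOn

theorem add_rightDeriv_mul_sub_le {Ψ : ℝ → ℝ} (hΨ : ConvexOn ℝ univ Ψ) (x y : ℝ) :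
    Ψ x + derivWithin Ψ (Ioi x) x * (y - x) ≤ Ψ y := by
  have hx : x ∈ interior (univ : Set ℝ) := by simp
  rcases lt_trichotomy y x with hyx | rfl | hxy
  · have hslope := (hΨ.slope_le_leftDeriv_of_mem_interior (mem_univ y) hx hyx).trans
      (hΨ.leftDeriv_le_rightDeriv_of_mem_interior hx)
    rw [slope_def_field, div_le_iff₀ (by linarith)] at hslope
    linarith
  · simp
  · have hslope := hΨ.rightDeriv_le_slope_of_mem_interior hx (mem_univ y) hxy
    rw [slope_def_field, le_div_iff₀ (by linarith)] at hslope
    linarith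

variable {E : Type*} [NormedAddCommGroup E] [NormedSpace ℝ E]

theorem add_apply_le_of_hasFDerivAt {g : E → ℝ} {g' : E →L[ℝ] ℝ} (hg : ConvexOn ℝ univ g)
    {z : E} (hg' : HasFDerivAt g g' z) (d : E) : g z + g' d ≤ g (z + d) := by
  set L := AffineMap.lineMap (k := ℝ) z (z + d)
  have hL : HasDerivAt (g ∘ L) (g' d) 0 := by
    have hg'L : HasFDerivAt g g' (L 0) :=
      (AffineMap.lineMap_apply_zero (k := ℝ) z (z + d)).symm ▸ hg'
    simpa using hg'L.comp_hasDerivAt (0 : ℝ) AffineMap.hasDerivAt_lineMap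
  have hslope := (hg.comp_affineMap L).le_slope_of_hasDerivAt (mem_univ 0) (mem_univ 1) one_pos hL
  simp only [slope_def_field, Function.comp_apply, AffineMap.lineMap_apply_one,
    AffineMap.lineMap_apply_zero, sub_zero, div_one, L] at hslope
  linarith

end ConvexOn

theorem W_le_What {Ψ : ℝ → ℝ} (hΨ : ConvexOn ℝ univ Ψ) {Γ : ℝ} (hΓ : 0 < Γ) (d g x : ℝ) :
    W d g x Γ Ψ ≤ What g x Γ Ψ := by
  set s := derivWithin Ψ (Ioi x) x
  -- `Ψ` lies above its tangent line of slope `s` at `x`, so `W` is below a concave quadratic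
  refine le_ciSup (f := fun e => W e g x Γ Ψ) ⟨(g + s) ^ 2 / (2 * Γ), ?_⟩ d
  rintro _ ⟨e, rfl⟩
  have htangent := hΨ.add_rightDeriv_mul_sub_le x (x + e)
  rw [le_div_iff₀ (by positivity)]
  simp only [W]
  nlinarith [sq_nonneg (Γ * e + (g + s))]

section SumSq

variable {ι : Type*} [Fintype ι]

theorem sum_sq_add (z d : ι → ℝ) :
    ∑ k, (z k + d k) ^ 2 = ∑ k, z k ^ 2 + ∑ k, 2 * z k * d k + ∑ k, d k ^ 2 := by
  simp only [← sum_add_distrib]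
  exact sum_congr rfl fun k _ => by ring

theorem hasFDerivAt_sum_sq (z : ι → ℝ) :
    HasFDerivAt (fun y : ι → ℝ => ∑ k, y k ^ 2)
      (∑ k, (2 * z k) • ContinuousLinearMap.proj (R := ℝ) (φ := fun _ : ι => ℝ) k) z := by
  refine HasFDerivAt.fun_sum fun k _ => ?_
  simpa [mul_smul] using (hasFDerivAt_apply (𝕜 := ℝ) k z).pow 2

theorem add_fderiv_add_sum_sq_le {g : (ι → ℝ) → ℝ} {μ : ℝ}
    (hg : ConvexOn ℝ univ fun y : ι → ℝ => g y - μ / 2 * ∑ k, y k ^ 2)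
    {z : ι → ℝ} (hd : DifferentiableAt ℝ g z) (d : ι → ℝ) :
    g z + fderiv ℝ g z d + μ / 2 * ∑ k, d k ^ 2 ≤ g (z + d) := by
  have := hg.add_apply_le_of_hasFDerivAt
    (hd.hasFDerivAt.sub ((hasFDerivAt_sum_sq z).const_mul (μ / 2))) d
  simp only [sub_apply, smul_apply, _root_.sum_apply, ContinuousLinearMap.proj_apply, smul_eq_mul,
    Pi.add_apply, sum_sq_add] at this
  linarith

theorem apply_add_smul_sub_le {F : (ι → ℝ) → ℝ} {μ : ℝ}
    (hF : ConvexOn ℝ univ fun y : ι → ℝ => F y - μ / 2 * ∑ k, y k ^ 2)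
    (z y : ι → ℝ) {γ : ℝ} (hγ0 : 0 ≤ γ) (hγ1 : γ ≤ 1) :
    F (z + γ • (y - z)) ≤
      (1 - γ) * F z + γ * F y - μ / 2 * (γ * (1 - γ)) * ∑ k, (y k - z k) ^ 2 := by
  have hcomb := hF.2 (mem_univ z) (mem_univ y) (sub_nonneg.2 hγ1) hγ0 (by ring)
  have hpoint : (1 - γ) • z + γ • y = z + γ • (y - z) := by
    rw [smul_sub, sub_smul, one_smul]; abel
  have hsq : ∑ k, (z + γ • (y - z)) k ^ 2 =
      (1 - γ) * ∑ k, z k ^ 2 + γ * ∑ k, y k ^ 2 - γ * (1 - γ) * ∑ k, (y k - z k) ^ 2 := by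
    simp only [mul_sum, ← sum_add_distrib, ← sum_sub_distrib]
    refine sum_congr rfl fun k _ => ?_
    simp only [Pi.add_apply, Pi.smul_apply, Pi.sub_apply, smul_eq_mul]
    ring
  simp only [hpoint, smul_eq_mul, hsq] at hcomb
  linarith

end SumSq

theorem fderiv_apply_eq_sum_grad {n : ℕ} (f : (Fin n → ℝ) → ℝ) (z d : Fin n → ℝ) :
    fderiv ℝ f z d = ∑ k, grad f z k * d k := by
  conv_lhs => rw [← univ_sum_single d, map_sum]
  refine sum_congr rfl fun k _ => ?_
  rw [grad, mul_comm, ← smul_eq_mul, ← map_smul, ← Pi.single_smul', smul_eq_mul, mul_one]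

theorem mul_sub_le_sum_What {n : ℕ} {f : (Fin n → ℝ) → ℝ} (hf : Differentiable ℝ f)
    {Ψ : Fin n → ℝ → ℝ} (hΨ : ∀ k, ConvexOn ℝ univ (Ψ k))
    {F : (Fin n → ℝ) → ℝ} (hF : ∀ y, F y = f y + ∑ k, Ψ k (y k))
    {Γ μf μF : ℝ} (hΓ : 0 < Γ) (hμF : 0 < μF) (hΓμ : μf ≤ Γ)
    (hscf : ConvexOn ℝ univ fun y : Fin n → ℝ => f y - μf / 2 * ∑ k, y k ^ 2)
    (hscF : ConvexOn ℝ univ fun y : Fin n → ℝ => F y - μF / 2 * ∑ k, y k ^ 2)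
    (z y : Fin n → ℝ) :
    μF / (μF + Γ - μf) * (F z - F y) ≤ ∑ k, What (grad f z k) (z k) Γ (Ψ k) := by
  set γ := μF / (μF + Γ - μf)
  have hden : 0 < μF + Γ - μf := by linarith
  have hγ0 : 0 ≤ γ := (div_pos hμF hden).le
  have hγ1 : γ ≤ 1 := (div_le_one hden).2 (by linarith)
  have hγ : μF * (1 - γ) = (Γ - μf) * γ := by
    simp only [γ]; field_simp; ring
  set d := γ • (y - z)
  have hd : ∑ k, d k ^ 2 = γ ^ 2 * ∑ k, (y k - z k) ^ 2 := by
    simp only [d, mul_sum, Pi.smul_apply, Pi.sub_apply, smul_eq_mul, mul_pow]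
  have hW : ∑ k, W (d k) (grad f z k) (z k) Γ (Ψ k) =
      -fderiv ℝ f z d - Γ / 2 * ∑ k, d k ^ 2 + ∑ k, Ψ k (z k) - ∑ k, Ψ k ((z + d) k) := by
    simp only [W, fderiv_apply_eq_sum_grad, sum_add_distrib, sum_sub_distrib, sum_neg_distrib,
      mul_sum, Pi.add_apply]
  have hf_lower := add_fderiv_add_sum_sq_le hscf (hf z) d
  have hF_upper := apply_add_smul_sub_le hscF z y hγ0 hγ1
  have hWhat : ∑ k, W (d k) (grad f z k) (z k) Γ (Ψ k) ≤
      ∑ k, What (grad f z k) (z k) Γ (Ψ k) :=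
    sum_le_sum fun k _ => W_le_What (hΨ k) hΓ _ _ _
  have hcancel : μF / 2 * (γ * (1 - γ)) * ∑ k, (y k - z k) ^ 2 =
      (Γ - μf) / 2 * ∑ k, d k ^ 2 := by
    rw [hd]; linear_combination (γ / 2 * ∑ k, (y k - z k) ^ 2) * hγ
  have hFz := hF z
  have hFw := hF (z + d)
  simp only [Pi.add_apply] at hW hFw
  linarith

section Lyapunov

variable {H : ℕ → ℝ} {r : ℕ} {θ : ℝ}

theorem sum_Icc_succ_eq_sum_range (g : ℕ → ℝ) (m k : ℕ) :
    ∑ i ∈ Icc (m + 1) (m + k), g i = ∑ j ∈ range k, g (m + j + 1) := by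
  rw [← Finset.Ico_add_one_right_eq_Icc, sum_Ico_eq_sum_range,
    show m + k + 1 - (m + 1) = k by omega]
  exact sum_congr rfl fun j _ => by rw [add_right_comm]

theorem mul_sum_window_le_of_progress (P : ℕ → ℝ) (hP : ∀ i, θ * H i ≤ P i)
    (hprog : ∀ t, 2 * r ≤ t →
      ∑ i ∈ Icc (t - 2 * r + 1) t, (H (i - 1) - H i) ≥
        ∑ i ∈ Icc (t - 2 * r + 1) (t - r), P (i - 1))
    (m : ℕ) : θ * ∑ j ∈ range r, H (m + j) ≤ H m - H (m + 2 * r) := by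
  have h := hprog (m + 2 * r) (by omega)
  rw [show m + 2 * r - 2 * r = m by omega, show m + 2 * r - r = m + r by omega,
    sum_Icc_succ_eq_sum_range, sum_Icc_succ_eq_sum_range] at h
  simp only [Nat.add_sub_cancel] at h
  have htele : ∑ j ∈ range (2 * r), (H (m + j) - H (m + j + 1)) = H m - H (m + 2 * r) :=
    sum_range_sub' (fun j => H (m + j)) _
  calc θ * ∑ j ∈ range r, H (m + j) ≤ ∑ j ∈ range r, P (m + j) := by
        rw [mul_sum]; exact sum_le_sum fun j _ => hP _
    _ ≤ H m - H (m + 2 * r) := htele ▸ h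

theorem sum_window_succ_le (hH : Antitone H) (hθ : 0 ≤ θ)
    (hwin : ∀ m, θ * ∑ j ∈ range r, H (m + j) ≤ H m - H (m + 2 * r)) (m : ℕ) :
    ∑ j ∈ range (2 * r), H (m + 1 + j) ≤ (1 - θ / 2) * ∑ j ∈ range (2 * r), H (m + j) := by
  have hshift : ∑ j ∈ range (2 * r), H (m + 1 + j) + H m =
      ∑ j ∈ range (2 * r), H (m + j) + H (m + 2 * r) := by
    rw [← sum_range_succ (fun j => H (m + j)), sum_range_succ']
    simp only [add_zero, add_right_comm m 1, add_assoc m]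
  have hpair : ∑ j ∈ range (2 * r), H (m + j) ≤ 2 * ∑ j ∈ range r, H (m + j) := by
    rw [two_mul, sum_range_add, two_mul, add_le_add_iff_left]
    exact sum_le_sum fun j _ => hH (by omega)
  have hhalf := mul_le_mul_of_nonneg_left hpair (by positivity : 0 ≤ θ / 2)
  linarith [hwin m]

theorem le_pow_mul_of_window (hr : 0 < r) (hθ : 0 ≤ θ) (hH : Antitone H) (hH0 : ∀ t, 0 ≤ H t)
    (hwin : ∀ m, θ * ∑ j ∈ range r, H (m + j) ≤ H m - H (m + 2 * r)) (m : ℕ) :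
    H (m + 2 * r) ≤ (1 - θ / 2) ^ (m + 1) * H 0 := by
  rcases (hH0 0).eq_or_lt with hzero | hpos
  · calc H (m + 2 * r) ≤ H 0 := hH (Nat.zero_le _)
      _ = (1 - θ / 2) ^ (m + 1) * H 0 := by rw [← hzero, mul_zero]
  -- without this bound the factor `1 - θ / 2` could be negative
  have hθ1 : θ ≤ 1 := by
    refine le_of_mul_le_mul_right ?_ hpos
    calc θ * H 0 ≤ θ * ∑ j ∈ range r, H (0 + j) := mul_le_mul_of_nonneg_left
          (single_le_sum (f := fun j => H (0 + j)) (fun j _ => hH0 _) (mem_range.2 hr)) hθ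
      _ ≤ H 0 - H (0 + 2 * r) := hwin 0
      _ ≤ 1 * H 0 := by linarith [hH0 (0 + 2 * r)]
  have hgeo := le_geom (u := fun m => ∑ j ∈ range (2 * r), H (m + j))
    (by linarith : 0 ≤ 1 - θ / 2) (m + 1) fun k _ => sum_window_succ_le hH hθ hwin k
  have hlow : (2 * r : ℝ) * H (m + 2 * r) ≤ ∑ j ∈ range (2 * r), H (m + 1 + j) := by
    simpa using card_nsmul_le_sum (range (2 * r)) (fun j => H (m + 1 + j)) _
      fun j hj => hH (by simp at hj; omega)
  have hS0 : ∑ j ∈ range (2 * r), H (0 + j) ≤ (2 * r : ℝ) * H 0 := by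
    simpa using sum_le_card_nsmul (range (2 * r)) (fun j => H (0 + j)) _
      fun j _ => hH (Nat.zero_le _)
  have h2r : (0 : ℝ) < 2 * r := by positivity
  refine le_of_mul_le_mul_left ?_ h2r
  calc (2 * r : ℝ) * H (m + 2 * r) ≤ (1 - θ / 2) ^ (m + 1) * ∑ j ∈ range (2 * r), H (0 + j) :=
        hlow.trans hgeo
    _ ≤ (1 - θ / 2) ^ (m + 1) * ((2 * r : ℝ) * H 0) :=
        mul_le_mul_of_nonneg_left hS0 (pow_nonneg (by linarith) _)
    _ = 2 * r * ((1 - θ / 2) ^ (m + 1) * H 0) := by ring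

end Lyapunov

theorem meta_theorem_strongly_convex_general {n : ℕ}
    (f : (Fin n → ℝ) → ℝ) (hf : Differentiable ℝ f)
    (Ψ : Fin n → ℝ → ℝ) (hΨ : ∀ k, ConvexOn ℝ Set.univ (Ψ k))
    (F : (Fin n → ℝ) → ℝ) (hF : ∀ y, F y = f y + ∑ k, Ψ k (y k))
    (Γ : ℝ) (hΓpos : 0 < Γ) (r q : ℕ) (hr : 1 ≤ r)
    (x : ℕ → Fin n → ℝ) (A : ℕ → ℝ) (hAnonneg : ∀ t, 0 ≤ A t) (hA0 : A 0 = 0)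
    (H : ℕ → ℝ) (hH : ∀ t, H t = F (x t) + A t)
    (hHdec : ∀ t : ℕ, 1 ≤ t → H t ≤ H (t - 1))
    (α β : ℝ) (hα : 0 < α) (hβ : 0 < β)
    (hprog : ∀ t : ℕ, 2 * r ≤ t →
      ∑ i ∈ Finset.Icc (t - 2 * r + 1) t, (H (i - 1) - H i) ≥
        ∑ i ∈ Finset.Icc (t - 2 * r + 1) (t - r),
          (α / n * ∑ k, What (grad f (x (i - 1)) k) (x (i - 1) k) Γ (Ψ k)
            + β / q * A (i - 1)))
    (μf μF : ℝ) (hμF : 0 < μF)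
    (hscf : ConvexOn ℝ Set.univ (fun y : Fin n → ℝ => f y - μf / 2 * ∑ k, y k ^ 2))
    (hscF : ConvexOn ℝ Set.univ (fun y : Fin n → ℝ => F y - μF / 2 * ∑ k, y k ^ 2))
    (hΓμ : Γ ≥ μf) (hFnonneg : ∀ y, 0 ≤ F y) (hFattained : ∃ y, F y = 0) :
    ∀ t : ℕ, 2 * r ≤ t →
      F (x t) ≤
        (1 - min (α / (2 * n) * (μF / (μF + Γ - μf))) (β / (2 * q))) ^ (t - 2 * r + 1)
          * F (x 0) := by
  obtain ⟨xmin, hxmin⟩ := hFattained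
  set γ := μF / (μF + Γ - μf)
  set θ := min (α / n * γ) (β / q)
  have hγ : 0 ≤ γ := div_nonneg hμF.le (by linarith)
  have hθ : 0 ≤ θ := le_min (by positivity) (by positivity)
  have hterm : ∀ i,
      θ * H i ≤ α / n * ∑ k, What (grad f (x i) k) (x i k) Γ (Ψ k) + β / q * A i := by
    intro i
    have hkey := mul_sub_le_sum_What hf hΨ hF hΓpos hμF hΓμ hscf hscF (x i) xmin
    rw [hxmin, sub_zero] at hkey
    rw [hH, mul_add]
    gcongr ?_ + ?_
    · calc θ * F (x i) ≤ α / n * γ * F (x i) :=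
            mul_le_mul_of_nonneg_right (min_le_left _ _) (hFnonneg _)
        _ ≤ _ := by rw [mul_assoc]; gcongr
    · exact mul_le_mul_of_nonneg_right (min_le_right _ _) (hAnonneg _)
  have hanti : Antitone H :=
    antitone_nat_of_succ_le fun t => by simpa using hHdec (t + 1) (by omega)
  have hHnonneg : ∀ t, 0 ≤ H t := fun t => by rw [hH]; linarith [hFnonneg (x t), hAnonneg t]
  have hwin := mul_sum_window_le_of_progress _ hterm hprog
  intro t ht
  obtain ⟨m, rfl⟩ := Nat.exists_eq_add_of_le' ht
  have hrate : min (α / (2 * n) * γ) (β / (2 * q)) = θ / 2 := by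
    rw [← min_div_div_right (by norm_num : (0:ℝ) ≤ 2)]
    congr 1 <;> ring
  calc F (x (m + 2 * r)) ≤ H (m + 2 * r) := by rw [hH]; linarith [hAnonneg (m + 2 * r)]
    _ ≤ (1 - θ / 2) ^ (m + 1) * H 0 :=
        le_pow_mul_of_window hr hθ hanti hHnonneg hwin m
    _ = _ := by rw [hrate, hH, hA0, add_zero, Nat.add_sub_cancel]

/-- Amortized meta-theorem, strongly convex case: if `H(t) = F(x^t) + A(t)` is
decreasing and satisfies the amortized progress inequality with parameters
`α, β > 0` over rounds of length `r` with interference parameter `q`, `F` is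
`μ_F`-strongly convex, `f` is `μ_f`-strongly convex, `Γ ≥ μ_f` and the minimum value
of `F` is `0`, then for all `t ≥ 2r`,
`F(x^t) ≤ (1 - min{(α/(2n))·μ_F/(μ_F+Γ-μ_f), β/(2q)})^(t-2r+1) · F(x⁰)`. -/
theorem meta_theorem_strongly_convex {n : ℕ} (hn : 0 < n)
    (f : (Fin n → ℝ) → ℝ) (hf : Differentiable ℝ f) (hfc : ConvexOn ℝ Set.univ f)
    (Ψ : Fin n → ℝ → ℝ) (hΨ : ∀ k, ConvexOn ℝ Set.univ (Ψ k))
    (F : (Fin n → ℝ) → ℝ) (hF : ∀ y, F y = f y + ∑ k, Ψ k (y k))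
    (Γ : ℝ) (hΓpos : 0 < Γ) (r q : ℕ) (hr : 1 ≤ r) (hq : 1 ≤ q)
    (x : ℕ → Fin n → ℝ) (A : ℕ → ℝ) (hAnonneg : ∀ t, 0 ≤ A t) (hA0 : A 0 = 0)
    (H : ℕ → ℝ) (hH : ∀ t, H t = F (x t) + A t)
    (hHdec : ∀ t : ℕ, 1 ≤ t → H t ≤ H (t - 1))
    (α β : ℝ) (hα : 0 < α) (hβ : 0 < β)
    (hprog : ∀ t : ℕ, 2 * r ≤ t →
      ∑ i ∈ Finset.Icc (t - 2 * r + 1) t, (H (i - 1) - H i) ≥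
        ∑ i ∈ Finset.Icc (t - 2 * r + 1) (t - r),
          (α / n * ∑ k, What (grad f (x (i - 1)) k) (x (i - 1) k) Γ (Ψ k)
            + β / q * A (i - 1)))
    (μf μF : ℝ) (hμf : 0 < μf) (hμF : 0 < μF)
    (hscf : ConvexOn ℝ Set.univ (fun y : Fin n → ℝ => f y - μf / 2 * ∑ k, y k ^ 2))
    (hscF : ConvexOn ℝ Set.univ (fun y : Fin n → ℝ => F y - μF / 2 * ∑ k, y k ^ 2))
    (hΓμ : Γ ≥ μf) (hFnonneg : ∀ y, 0 ≤ F y) (hFattained : ∃ y, F y = 0) :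
    ∀ t : ℕ, 2 * r ≤ t →
      F (x t) ≤
        (1 - min (α / (2 * n) * (μF / (μF + Γ - μf))) (β / (2 * q))) ^ (t - 2 * r + 1)
          * F (x 0) :=
  meta_theorem_strongly_convex_general f hf Ψ hΨ F hF Γ hΓpos r q hr x A hAnonneg hA0 H hH hHdec α β
    hα hβ hprog μf μF hμF hscf hscF hΓμ hFnonneg hFattained
end

section
/- The Lyapunov function H of parallel asynchronous coordinate descent is decreasing: let q ≥ 1 be an integer, suppose f is differentiable with coordinatewise Lipschitz constants L_{jk} (i.e., |∇_k f(x + r·e_j) − ∇_k f(x)| ≤ L_{jk}·|r| for all x, r), let L_max := max_{j,k} L_{jk} > 0, and let Γ ≥ 4·q·L_max. Let (x^t)_{t≥0} satisfy x^t = x^{t−1} + d^t·e_{k_t} with d^t := d̂(g̃^t, x^{t−1}_{k_t}, Γ, Ψ_{k_t}), where g̃^t = ∇_{k_t} f(x̃^t) for some vector x̃^t whose coordinates are inconsistent reads of the recent past: for every coordinate k there exists s with max{0, t−q−1} ≤ s ≤ t−1 and x̃^t_k = x^s_k. Define A(t) := (Γ/16)·Σ_{τ=max{1, t−q}}^{t}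 ((τ + q − t)/q)·(d^τ)² and H(t) := F(x^t) + A(t). Then H(t) ≤ H(t−1) for every t ≥ 1. -/
/-!
Along coordinate `k`, the smoothness bound gives the descent lemma
`f(x + D e_k) ≤ f(x) + ∇_k f(x) D + (L_kk/2) D²`, and comparing the prox step with `d = 0` gives
`Ψ_k(x_k + D) - Ψ_k(x_k) ≤ -g̃ D - (Γ/2) D²`. So `F` decreases by `((Γ - L_kk)/2) D²` up to the
cross term `(∇_k f(x^{t-1}) - g̃^t) D`. The stale read `x̃^t` differs from `x^{t-1}` only through
the updates `d^τ`, `t - q ≤ τ ≤ t - 1`, so the gradient error is at most `L_max Σ |d^τ|`, and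
AM-GM bounds the cross term by `(Γ/(16q)) Σ (d^τ)² + (Γ/4) D²`. The first part is exactly what
`A` releases when the weights of the window drop by `1/q`; the second is paid by the prox step.
-/

open Finset

theorem le_add_mul_add_half_sq_of_abs_deriv_sub_le {φ φ' : ℝ → ℝ} {L : ℝ}
    (hφ : ∀ s, HasDerivAt φ (φ' s) s) (hφ' : ∀ s, |φ' s - φ' 0| ≤ L * |s|) (D : ℝ) :
    φ D ≤ φ 0 + φ' 0 * D + L / 2 * D ^ 2 := by
  set g : ℝ → ℝ := fun s => φ s - φ' 0 * s - L / 2 * s ^ 2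
  have hg : ∀ s, HasDerivAt g (φ' s - φ' 0 - L * s) s := fun s => by
    refine (((hφ s).sub ((hasDerivAt_id' s).const_mul (φ' 0))).sub
      ((hasDerivAt_pow 2 s).const_mul (L / 2))).congr_deriv ?_
    norm_num
    ring
  have hg_cont : ContinuousOn g Set.univ :=
    (continuous_iff_continuousAt.2 fun s => (hg s).continuousAt).continuousOn
  suffices g D ≤ g 0 by simp only [g] at this; linarith
  rcases le_total 0 D with hD | hD
  · refine antitoneOn_of_hasDerivWithinAt_nonpos (convex_Ici 0) (hg_cont.mono (Set.subset_univ _))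
      (fun s _ => (hg s).hasDerivWithinAt) (fun s hs => ?_) (Set.mem_Ici.2 le_rfl) hD hD
    rw [interior_Ici] at hs
    have := hφ' s
    rw [abs_of_pos (show 0 < s from hs)] at this
    linarith [le_abs_self (φ' s - φ' 0)]
  · refine monotoneOn_of_hasDerivWithinAt_nonneg (convex_Iic 0) (hg_cont.mono (Set.subset_univ _))
      (fun s _ => (hg s).hasDerivWithinAt) (fun s hs => ?_) hD (Set.mem_Iic.2 le_rfl) hD
    rw [interior_Iic] at hs
    have := hφ' s
    rw [abs_of_neg (show s < 0 from hs)] at this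
    linarith [neg_abs_le (φ' s - φ' 0)]

theorem le_add_grad_mul_add_half_sq {n : ℕ} {f : (Fin n → ℝ) → ℝ} (hf : Differentiable ℝ f)
    {k : Fin n} {Lk : ℝ}
    (hLk : ∀ y r, |grad f (y + r • (Pi.single k 1 : Fin n → ℝ)) k - grad f y k| ≤ Lk * |r|)
    (x : Fin n → ℝ) (D : ℝ) :
    f (x + D • Pi.single k 1) ≤ f x + grad f x k * D + Lk / 2 * D ^ 2 := by
  have hline : ∀ s : ℝ, HasDerivAt (fun s : ℝ => f (x + s • Pi.single k 1))
      (grad f (x + s • Pi.single k 1) k) s := fun s => by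
    have hmove : HasDerivAt (fun s : ℝ => x + s • Pi.single k 1)
        (Pi.single k 1 : Fin n → ℝ) s := by
      simpa using ((hasDerivAt_id' s).smul_const (Pi.single k 1 : Fin n → ℝ)).const_add x
    exact (hf _).hasFDerivAt.comp_hasDerivAt s hmove
  simpa using le_add_mul_add_half_sq_of_abs_deriv_sub_le hline (fun s => by simpa using hLk x s) D

theorem abs_sub_le_mul_sum_abs_sub {ι : Type*} [Fintype ι] [DecidableEq ι]
    {G : (ι → ℝ) → ℝ} {M : ℝ}
    (hG : ∀ j y r, |G (y + r • Pi.single j 1) - G y| ≤ M * |r|) (y z : ι → ℝ) :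
    |G y - G z| ≤ M * ∑ c, |y c - z c| := by
  have key : ∀ s : Finset ι, |G (s.piecewise y z) - G z| ≤ M * ∑ c ∈ s, |y c - z c| := by
    intro s
    induction s using Finset.induction_on with
    | empty => simp
    | @insert j s hj ih =>
      have hsplit : (insert j s).piecewise y z = s.piecewise y z + (y j - z j) • Pi.single j 1 := by
        ext c
        rcases eq_or_ne c j with rfl | hc
        · simp [hj]
        · simp [hc, Finset.piecewise]
      calc |G ((insert j s).piecewise y z) - G z|
          ≤ |G ((insert j s).piecewise y z) - G (s.piecewise y z)| + |G (s.piecewise y z) - G z| :=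
            abs_sub_le _ _ _
        _ ≤ M * |y j - z j| + M * ∑ c ∈ s, |y c - z c| := add_le_add (hsplit ▸ hG _ _ _) ih
        _ = M * ∑ c ∈ insert j s, |y c - z c| := by rw [sum_insert hj, mul_add]
  simpa using key univ

theorem abs_grad_sub_grad_le {n : ℕ} {f : (Fin n → ℝ) → ℝ} {L : Fin n → Fin n → ℝ}
    (hL : ∀ (j k : Fin n) (x : Fin n → ℝ) (r : ℝ),
      |grad f (x + r • (Pi.single j 1 : Fin n → ℝ)) k - grad f x k| ≤ L j k * |r|)
    {Lmax : ℝ} (hLmax : ∀ j k, L j k ≤ Lmax) (y z : Fin n → ℝ) (k : Fin n) :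
    |grad f y k - grad f z k| ≤ Lmax * ∑ c, |y c - z c| :=
  abs_sub_le_mul_sum_abs_sub (G := fun y => grad f y k)
    (fun j y r => (hL j k y r).trans (mul_le_mul_of_nonneg_right (hLmax j k) (abs_nonneg r))) y z

theorem abs_sub_le_sum_Ioc_abs_sub (u : ℕ → ℝ) {a b : ℕ} (hab : a ≤ b) :
    |u b - u a| ≤ ∑ τ ∈ Ioc a b, |u τ - u (τ - 1)| := by
  induction b, hab using Nat.le_induction with
  | base => simp
  | succ b hab ih =>
    rw [sum_Ioc_succ_top hab, Nat.add_sub_cancel]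
    calc |u (b + 1) - u a| ≤ |u b - u a| + |u (b + 1) - u b| := by
          simpa [add_comm] using abs_sub_le (u (b + 1)) (u b) (u a)
      _ ≤ _ := by linarith

theorem sum_abs_add_smul_single_sub {ι : Type*} [Fintype ι] [DecidableEq ι]
    (y : ι → ℝ) (k : ι) (D : ℝ) : ∑ c, |(y + D • (Pi.single k 1 : ι → ℝ)) c - y c| = |D| := by
  simp only [Pi.add_apply, add_sub_cancel_left]
  simp [Pi.single_apply, apply_ite]

theorem sum_apply_add_smul_single {ι : Type*} [Fintype ι] [DecidableEq ι]
    (Ψ : ι → ℝ → ℝ) (y : ι → ℝ) (k : ι) (D : ℝ) :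
    ∑ c, Ψ c ((y + D • (Pi.single k 1 : ι → ℝ)) c)
      = ∑ c, Ψ c (y c) + (Ψ k (y k + D) - Ψ k (y k)) := by
  rw [← sub_eq_iff_eq_add', ← sum_sub_distrib, sum_eq_single k]
  · simp
  · intro c _ hc; simp [hc]
  · simp

theorem sum_abs_sub_le_of_stale_read {ι : Type*} [Fintype ι] [DecidableEq ι]
    {x : ℕ → ι → ℝ} {idx : ℕ → ι} {d : ℕ → ℝ}
    (hx : ∀ t, 1 ≤ t → x t = x (t - 1) + d t • (Pi.single (idx t) 1 : ι → ℝ))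
    {y : ι → ℝ} {a b : ℕ} (hy : ∀ c, ∃ s, a ≤ s ∧ s ≤ b ∧ y c = x s c) :
    ∑ c, |x b c - y c| ≤ ∑ τ ∈ Ioc a b, |d τ| := by
  calc ∑ c, |x b c - y c| ≤ ∑ c, ∑ τ ∈ Ioc a b, |x τ c - x (τ - 1) c| := by
        refine sum_le_sum fun c _ => ?_
        obtain ⟨s, has, hsb, hyc⟩ := hy c
        rw [hyc]
        exact (abs_sub_le_sum_Ioc_abs_sub (x · c) hsb).trans
          (sum_le_sum_of_subset_of_nonneg (Ioc_subset_Ioc_left has) fun _ _ _ => abs_nonneg _)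
    _ = ∑ τ ∈ Ioc a b, |d τ| := by
        rw [sum_comm]
        refine sum_congr rfl fun τ hτ => ?_
        have hτ1 : 1 ≤ τ := Nat.one_le_of_lt (mem_Ioc.1 hτ).1
        rw [hx τ hτ1, sum_abs_add_smul_single_sub]

theorem sub_le_of_isMaxOn_W {Ψ : ℝ → ℝ} {g y Γ D : ℝ}
    (hD : IsMaxOn (fun a => W a g y Γ Ψ) Set.univ D) :
    Ψ (y + D) - Ψ y ≤ -(g * D) - Γ / 2 * D ^ 2 := by
  have hW0 : W 0 g y Γ Ψ = 0 := by simp [W]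
  have h0 : 0 ≤ W D g y Γ Ψ := hW0 ▸ hD (Set.mem_univ 0)
  unfold W at h0
  linarith

theorem objective_add_smul_single_le_of_isMaxOn_W {n : ℕ} {f : (Fin n → ℝ) → ℝ}
    (hf : Differentiable ℝ f) {k : Fin n} {Lk : ℝ}
    (hLk : ∀ y r, |grad f (y + r • (Pi.single k 1 : Fin n → ℝ)) k - grad f y k| ≤ Lk * |r|)
    (Ψ : Fin n → ℝ → ℝ) (y : Fin n → ℝ) {g Γ D : ℝ}
    (hD : IsMaxOn (fun a => W a g (y k) Γ (Ψ k)) Set.univ D) :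
    f (y + D • Pi.single k 1) + ∑ c, Ψ c ((y + D • (Pi.single k 1 : Fin n → ℝ)) c)
      ≤ f y + ∑ c, Ψ c (y c) + (grad f y k - g) * D - (Γ - Lk) / 2 * D ^ 2 := by
  rw [sum_apply_add_smul_single]
  linarith [le_add_grad_mul_add_half_sq hf hLk y D, sub_le_of_isMaxOn_W hD]

noncomputable def laggedSum (q : ℕ) (a : ℕ → ℝ) (t : ℕ) : ℝ :=
  ∑ τ ∈ Icc (max 1 (t - q)) t, ((τ + q - t : ℕ) : ℝ) / q * a τ

theorem laggedSum_succ {q : ℕ} (hq : 0 < q) (a : ℕ → ℝ) (m : ℕ) :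
    laggedSum q a (m + 1) = laggedSum q a m + a (m + 1) - (∑ τ ∈ Ioc (m - q) m, a τ) / q := by
  have hwindow : Icc (max 1 (m + 1 - q)) (m + 1) = insert (m + 1) (Ioc (m - q) m) := by
    ext τ; simp only [mem_Icc, mem_insert, mem_Ioc]; omega
  have hold : laggedSum q a m = ∑ τ ∈ Ioc (m - q) m, ((τ + q - m : ℕ) : ℝ) / q * a τ := by
    refine (sum_subset (fun τ hτ => ?_) fun τ hτ hτ' => ?_).symm
    · simp only [mem_Icc, mem_Ioc] at hτ ⊢; omega
    · simp only [mem_Icc, mem_Ioc] at hτ hτ'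
      -- the only such `τ` is `m - q`, whose weight vanishes
      have : τ + q - m = 0 := by omega
      simp [this]
  have hshift : ∑ τ ∈ Ioc (m - q) m, ((τ + q - m : ℕ) : ℝ) / q * a τ
      = ∑ τ ∈ Ioc (m - q) m, ((τ + q - (m + 1) : ℕ) : ℝ) / q * a τ
        + (∑ τ ∈ Ioc (m - q) m, a τ) / q := by
    rw [sum_div, ← sum_add_distrib]
    refine sum_congr rfl fun τ hτ => ?_
    rw [mem_Ioc] at hτ
    rw [show τ + q - m = τ + q - (m + 1) + 1 by omega]
    push_cast
    ring
  have hq' : (q : ℝ) ≠ 0 := by positivity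
  rw [laggedSum, hwindow, sum_insert (by simp), hold, hshift,
    show m + 1 + q - (m + 1) = q by omega, div_self hq']
  ring

theorem sum_abs_mul_abs_le {ι : Type*} (s : Finset ι) (a : ι → ℝ) (b : ℝ) :
    (∑ τ ∈ s, |a τ|) * |b| ≤ (∑ τ ∈ s, a τ ^ 2) / 4 + #s * b ^ 2 := by
  rw [sum_mul, sum_div, ← nsmul_eq_mul, ← sum_const, ← sum_add_distrib]
  refine sum_le_sum fun τ _ => ?_
  nlinarith [sq_nonneg (|a τ| - 2 * |b|), sq_abs (a τ), sq_abs b]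

theorem mul_sum_abs_mul_abs_le {ι : Type*} {s : Finset ι} {q : ℕ} (hq : 0 < q) (hs : #s ≤ q)
    {M Γ : ℝ} (hM : 0 ≤ M) (hΓ : 4 * q * M ≤ Γ) (a : ι → ℝ) (b : ℝ) :
    M * (∑ τ ∈ s, |a τ|) * |b| ≤ Γ / 16 * ((∑ τ ∈ s, a τ ^ 2) / q) + Γ / 4 * b ^ 2 := by
  set S2 := ∑ τ ∈ s, a τ ^ 2
  have hS2 : 0 ≤ S2 := sum_nonneg fun τ _ => sq_nonneg (a τ)
  have hq' : (0 : ℝ) < q := by exact_mod_cast hq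
  have hsq : (#s : ℝ) ≤ q := by exact_mod_cast hs
  have hsquares : M * (S2 / 4) ≤ Γ / 16 * (S2 / q) :=
    calc M * (S2 / 4) = 4 * q * M * (S2 / q) / 16 := by field_simp; ring
      _ ≤ Γ * (S2 / q) / 16 := by gcongr
      _ = Γ / 16 * (S2 / q) := by ring
  have hcard : M * #s * b ^ 2 ≤ Γ / 4 * b ^ 2 := by
    gcongr
    nlinarith
  calc M * (∑ τ ∈ s, |a τ|) * |b| ≤ M * (S2 / 4 + #s * b ^ 2) := by
        rw [mul_assoc]; exact mul_le_mul_of_nonneg_left (sum_abs_mul_abs_le s a b) hM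
    _ ≤ _ := by linarith

theorem pacd_H_decreasing_general {n : ℕ} (q : ℕ) (hq : 1 ≤ q)
    (f : (Fin n → ℝ) → ℝ) (hf : Differentiable ℝ f)
    (L : Fin n → Fin n → ℝ)
    (hL : ∀ (j k : Fin n) (x : Fin n → ℝ) (r : ℝ),
      |grad f (x + r • (Pi.single j 1 : Fin n → ℝ)) k - grad f x k| ≤ L j k * |r|)
    (Lmax : ℝ) (hLmax_ub : ∀ j k, L j k ≤ Lmax)
    (hLmax_pos : 0 < Lmax)
    (Ψ : Fin n → ℝ → ℝ)
    (F : (Fin n → ℝ) → ℝ) (hF : ∀ y, F y = f y + ∑ k, Ψ k (y k))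
    (Γ : ℝ) (hΓ : Γ ≥ 4 * q * Lmax)
    (x xtilde : ℕ → Fin n → ℝ) (idx : ℕ → Fin n) (d gtilde : ℕ → ℝ)
    (hread : ∀ t : ℕ, 1 ≤ t → ∀ c : Fin n,
      ∃ s : ℕ, t - q - 1 ≤ s ∧ s ≤ t - 1 ∧ xtilde t c = x s c)
    (hg : ∀ t : ℕ, 1 ≤ t → gtilde t = grad f (xtilde t) (idx t))
    (hd : ∀ t : ℕ, 1 ≤ t →
      IsMaxOn (fun a : ℝ => W a (gtilde t) (x (t - 1) (idx t)) Γ (Ψ (idx t)))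
        Set.univ (d t))
    (hx : ∀ t : ℕ, 1 ≤ t →
      x t = x (t - 1) + d t • (Pi.single (idx t) 1 : Fin n → ℝ))
    (A H : ℕ → ℝ)
    (hA : ∀ t, A t =
      Γ / 16 * ∑ τ ∈ Finset.Icc (max 1 (t - q)) t, ((τ + q - t : ℕ) : ℝ) / q * d τ ^ 2)
    (hH : ∀ t, H t = F (x t) + A t) :
    ∀ t : ℕ, 1 ≤ t → H t ≤ H (t - 1) := by
  intro t ht
  obtain ⟨m, rfl⟩ : ∃ m, t = m + 1 := ⟨t - 1, by omega⟩
  show H (m + 1) ≤ H m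
  set k := idx (m + 1)
  have hobj := objective_add_smul_single_le_of_isMaxOn_W hf (hL k k) Ψ (x m) (hd (m + 1) ht)
  have hcross : (grad f (x m) k - gtilde (m + 1)) * d (m + 1)
      ≤ Lmax * (∑ τ ∈ Ioc (m - q) m, |d τ|) * |d (m + 1)| := by
    have hread_window : ∀ c, ∃ s, m - q ≤ s ∧ s ≤ m ∧ xtilde (m + 1) c = x s c := fun c => by
      obtain ⟨s, hs, hsm, hread_c⟩ := hread (m + 1) ht c
      exact ⟨s, by omega, hsm, hread_c⟩
    rw [hg (m + 1) ht]
    calc _ ≤ |grad f (x m) k - grad f (xtilde (m + 1)) k| * |d (m + 1)| :=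
          (le_abs_self _).trans_eq (abs_mul _ _)
      _ ≤ _ := by
          gcongr
          exact (abs_grad_sub_grad_le hL hLmax_ub _ _ k).trans
            (mul_le_mul_of_nonneg_left (sum_abs_sub_le_of_stale_read hx hread_window) hLmax_pos.le)
  have hpenalty := mul_sum_abs_mul_abs_le hq (s := Ioc (m - q) m) (by simp; omega)
    hLmax_pos.le hΓ d (d (m + 1))
  have hLkk : L k k * d (m + 1) ^ 2 ≤ Γ / 4 * d (m + 1) ^ 2 := by
    have hq1 : (1 : ℝ) ≤ q := by exact_mod_cast hq
    gcongr
    nlinarith [hLmax_ub k k]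
  have hstep : x (m + 1) = x m + d (m + 1) • Pi.single k 1 := hx (m + 1) ht
  rw [hH, hH, hF, hF, hA, hA, hstep]
  change _ + Γ / 16 * laggedSum q _ _ ≤ _ + Γ / 16 * laggedSum q _ _
  rw [laggedSum_succ hq (fun τ => d τ ^ 2) m]
  have hΓ₀ : 0 ≤ Γ := le_trans (by positivity) hΓ
  linarith [mul_nonneg hΓ₀ (sq_nonneg (d (m + 1)))]

/-- The Lyapunov function `H` of parallel asynchronous coordinate descent is
decreasing: with coordinatewise Lipschitz constants `L j k`, `L_max = max L > 0`,
`Γ ≥ 4·q·L_max`, updates `x^t = x^{t-1} + d^t·e_{k_t}` where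
`d^t = d̂(g̃^t, x^{t-1}_{k_t}, Γ, Ψ_{k_t})` and `g̃^t = ∇_{k_t} f(x̃^t)` for an
inconsistent read `x̃^t` (each coordinate read from some time in
`[max{0, t-q-1}, t-1]`), and
`A(t) = (Γ/16)·Σ_{τ=max{1,t-q}}^{t} ((τ+q-t)/q)·(d^τ)²`,
the function `H(t) = F(x^t) + A(t)` satisfies `H(t) ≤ H(t-1)` for all `t ≥ 1`. -/
theorem pacd_H_decreasing {n : ℕ} (hn : 0 < n) (q : ℕ) (hq : 1 ≤ q)
    (f : (Fin n → ℝ) → ℝ) (hf : Differentiable ℝ f) (hfc : ConvexOn ℝ Set.univ f)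
    (L : Fin n → Fin n → ℝ)
    (hL : ∀ (j k : Fin n) (x : Fin n → ℝ) (r : ℝ),
      |grad f (x + r • (Pi.single j 1 : Fin n → ℝ)) k - grad f x k| ≤ L j k * |r|)
    (Lmax : ℝ) (hLmax_mem : ∃ j k, Lmax = L j k) (hLmax_ub : ∀ j k, L j k ≤ Lmax)
    (hLmax_pos : 0 < Lmax)
    (Ψ : Fin n → ℝ → ℝ) (hΨ : ∀ k, ConvexOn ℝ Set.univ (Ψ k))
    (F : (Fin n → ℝ) → ℝ) (hF : ∀ y, F y = f y + ∑ k, Ψ k (y k))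
    (Γ : ℝ) (hΓ : Γ ≥ 4 * q * Lmax)
    (x xtilde : ℕ → Fin n → ℝ) (idx : ℕ → Fin n) (d gtilde : ℕ → ℝ)
    (hread : ∀ t : ℕ, 1 ≤ t → ∀ c : Fin n,
      ∃ s : ℕ, t - q - 1 ≤ s ∧ s ≤ t - 1 ∧ xtilde t c = x s c)
    (hg : ∀ t : ℕ, 1 ≤ t → gtilde t = grad f (xtilde t) (idx t))
    (hd : ∀ t : ℕ, 1 ≤ t →
      IsMaxOn (fun a : ℝ => W a (gtilde t) (x (t - 1) (idx t)) Γ (Ψ (idx t)))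
        Set.univ (d t))
    (hx : ∀ t : ℕ, 1 ≤ t →
      x t = x (t - 1) + d t • (Pi.single (idx t) 1 : Fin n → ℝ))
    (A H : ℕ → ℝ)
    (hA : ∀ t, A t =
      Γ / 16 * ∑ τ ∈ Finset.Icc (max 1 (t - q)) t, ((τ + q - t : ℕ) : ℝ) / q * d τ ^ 2)
    (hH : ∀ t, H t = F (x t) + A t) :
    ∀ t : ℕ, 1 ≤ t → H t ≤ H (t - 1) :=
  pacd_H_decreasing_general q hq f hf L hL Lmax hLmax_ub hLmax_pos Ψ F hF Γ hΓ x xtilde idx d gtilde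
    hread hg hd hx A H hA hH
end
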